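/- arXiv:1412.6614 — 3 statements merged into one kernel-verified Lean document; each statement's English description precedes it below -/
import Mathlib

section
/- Let F: (ℝ^d)^H × ℝ^H → ℝ be any function invariant under per-unit positive rescaling, i.e., F((c_h·u_h)_h, (v_h/c_h)_h) = F((u_h)_h, (v_h)_h) for all c_h > 0. Then inf over (u_h)_h, (v_h)_h of F((u_h), (v_h)) + (λ/2)·Σ_h (‖u_h‖² + v_h²) equals inf over (u_h)_h with ‖u_h‖ ≤ 1 and (v_h)_h of F((u_h), (v_h)) + λ·Σ_h |v_h|, for any λ > 0. -/
open Finset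

/-- Two nonempty sets of reals that approximately dominate each other have the same infimum. -/
lemma sInf_eq_sInf_of_approx (A B : Set ℝ) (hA : A.Nonempty) (hB : B.Nonempty)
    (h1 : ∀ a ∈ A, ∀ ε > 0, ∃ b ∈ B, b ≤ a + ε)
    (h2 : ∀ b ∈ B, ∀ ε > 0, ∃ a ∈ A, a ≤ b + ε) : sInf A = sInf B := by
  by_cases hbdd : BddBelow A
  · have hbddB : BddBelow B := by
      obtain ⟨x, hx⟩ := hbdd
      refine ⟨x, fun b hb => ?_⟩
      refine le_of_forall_pos_le_add (fun ε hε => ?_)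
      obtain ⟨a, ha, hab⟩ := h2 b hb ε hε
      exact le_trans (hx ha) hab
    apply le_antisymm
    · refine le_csInf hB (fun b hb => ?_)
      refine le_of_forall_pos_le_add (fun ε hε => ?_)
      obtain ⟨a, ha, hab⟩ := h2 b hb ε hε
      exact le_trans (csInf_le hbdd ha) hab
    · refine le_csInf hA (fun a ha => ?_)
      refine le_of_forall_pos_le_add (fun ε hε => ?_)
      obtain ⟨b, hb, hab⟩ := h1 a ha ε hε
      exact le_trans (csInf_le hbddB hb) hab
  · have hbddB : ¬ BddBelow B := by
      rintro ⟨x, hx⟩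
      apply hbdd
      refine ⟨x, fun a ha => ?_⟩
      refine le_of_forall_pos_le_add (fun ε hε => ?_)
      obtain ⟨b, hb, hab⟩ := h1 a ha ε hε
      exact le_trans (hx hb) hab
    rw [Real.sInf_of_not_bddBelow hbdd, Real.sInf_of_not_bddBelow hbddB]

set_option maxHeartbeats 1000000 in
/-- ℓ2 weight decay on both layers equals unit-ball constraint plus ℓ1 regularization,
for any objective `F` invariant under per-unit positive rescaling. -/
theorem weight_decay_eq_l1 {d H : ℕ} (lam : ℝ) (hlam : 0 < lam)
    (F : (Fin H → EuclideanSpace ℝ (Fin d)) → (Fin H → ℝ) → ℝ)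
    (hF : ∀ (u : Fin H → EuclideanSpace ℝ (Fin d)) (v : Fin H → ℝ)
        (c : Fin H → ℝ), (∀ h, 0 < c h) →
        F (fun h => c h • u h) (fun h => v h / c h) = F u v) :
    sInf {r : ℝ | ∃ (u : Fin H → EuclideanSpace ℝ (Fin d)) (v : Fin H → ℝ),
        r = F u v + (lam / 2) * ∑ h, (‖u h‖ ^ 2 + (v h) ^ 2)} =
    sInf {r : ℝ | ∃ (u : Fin H → EuclideanSpace ℝ (Fin d)) (v : Fin H → ℝ),
        (∀ h, ‖u h‖ ≤ 1) ∧ r = F u v + lam * ∑ h, |v h|} := by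
  apply sInf_eq_sInf_of_approx
  · exact ⟨_, 0, 0, rfl⟩
  · exact ⟨_, 0, 0, fun h => by simp, rfl⟩
  -- Direction 1: from unconstrained ℓ2 to constrained ℓ1, up to ε.
  · rintro a ⟨u, v, rfl⟩ ε hε
    set S : ℝ := ∑ h, |v h| with hS
    have hS0 : 0 ≤ S := Finset.sum_nonneg (fun h _ => abs_nonneg _)
    set δ : ℝ := ε / (lam * (S + 1)) with hδdef
    have hδ : 0 < δ := div_pos hε (mul_pos hlam (by linarith))
    set c : Fin H → ℝ := fun h => (‖u h‖ + δ)⁻¹ with hc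
    have hcpos : ∀ h, 0 < c h := fun h =>
      inv_pos.mpr (by positivity)
    set u' : Fin H → EuclideanSpace ℝ (Fin d) := fun h => c h • u h with hu'
    set v' : Fin H → ℝ := fun h => v h / c h with hv'
    refine ⟨F u' v' + lam * ∑ h, |v' h|, ⟨u', v', fun h => ?_, rfl⟩, ?_⟩
    · -- constraint ‖u' h‖ ≤ 1
      have : ‖u' h‖ = (‖u h‖ + δ)⁻¹ * ‖u h‖ := by
        rw [hu', norm_smul, Real.norm_eq_abs, abs_of_pos (hcpos h)]
      rw [this, inv_mul_le_iff₀ (by positivity)]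
      nlinarith
    · have hFeq : F u' v' = F u v := hF u v c hcpos
      rw [hFeq]
      have hterm : ∀ h ∈ Finset.univ (α := Fin H),
          |v' h| ≤ (‖u h‖ ^ 2 + (v h) ^ 2) / 2 + δ * |v h| := by
        intro h _
        have : v' h = v h * (‖u h‖ + δ) := by
          rw [hv', hc]; simp [div_eq_mul_inv]
        rw [this, abs_mul, abs_of_pos (by positivity : (0:ℝ) < ‖u h‖ + δ)]
        have h1 : |v h| * ‖u h‖ ≤ (‖u h‖ ^ 2 + (v h) ^ 2) / 2 := by
          nlinarith [sq_nonneg (‖u h‖ - |v h|), sq_abs (v h)]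
        nlinarith
      have hsum : ∑ h, |v' h| ≤ (∑ h, (‖u h‖ ^ 2 + (v h) ^ 2)) / 2 + δ * S := by
        calc ∑ h, |v' h| ≤ ∑ h, ((‖u h‖ ^ 2 + (v h) ^ 2) / 2 + δ * |v h|) :=
              Finset.sum_le_sum hterm
          _ = (∑ h, (‖u h‖ ^ 2 + (v h) ^ 2)) / 2 + δ * S := by
              rw [Finset.sum_add_distrib, ← Finset.sum_div, ← Finset.mul_sum, hS]
      have hδS : lam * (δ * S) ≤ ε := by
        have : lam * δ = ε / (S + 1) := by
          rw [hδdef]; field_simp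
        rw [← mul_assoc, this]
        rw [div_mul_eq_mul_div, div_le_iff₀ (by linarith)]
        nlinarith
      have := mul_le_mul_of_nonneg_left hsum (le_of_lt hlam)
      rw [mul_add] at this
      linarith
  -- Direction 2: from constrained ℓ1 to unconstrained ℓ2, up to ε.
  · rintro b ⟨u, v, hcon, rfl⟩ ε hε
    set S : ℝ := ∑ h, |v h| with hS
    have hS0 : 0 ≤ S := Finset.sum_nonneg (fun h _ => abs_nonneg _)
    have hH0 : (0:ℝ) ≤ (H:ℝ) := Nat.cast_nonneg _
    set δ : ℝ := 2 * ε / (lam * ((H:ℝ) + S + 1)) with hδdef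
    have hδ : 0 < δ := div_pos (by linarith) (mul_pos hlam (by linarith))
    set c : Fin H → ℝ := fun h => Real.sqrt ((|v h| + δ) / (‖u h‖ + δ)) with hc
    have hcpos : ∀ h, 0 < c h := fun h =>
      Real.sqrt_pos.mpr (div_pos (by positivity) (by positivity))
    set u' : Fin H → EuclideanSpace ℝ (Fin d) := fun h => c h • u h with hu'
    set v' : Fin H → ℝ := fun h => v h / c h with hv'
    refine ⟨F u' v' + (lam / 2) * ∑ h, (‖u' h‖ ^ 2 + (v' h) ^ 2), ⟨u', v', rfl⟩, ?_⟩
    have hFeq : F u' v' = F u v := hF u v c hcpos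
    rw [hFeq]
    have hcsq : ∀ h, (c h) ^ 2 = (|v h| + δ) / (‖u h‖ + δ) := by
      intro h
      rw [hc, Real.sq_sqrt (le_of_lt (div_pos (by positivity) (by positivity)))]
    have hterm : ∀ h ∈ Finset.univ (α := Fin H),
        ‖u' h‖ ^ 2 + (v' h) ^ 2 ≤ 2 * |v h| + δ * (1 + |v h|) := by
      intro h _
      have hx0 : (0:ℝ) ≤ ‖u h‖ := norm_nonneg _
      have hw0 : (0:ℝ) ≤ |v h| := abs_nonneg _
      have hx1 : ‖u h‖ ≤ 1 := hcon h
      have hden1 : (0:ℝ) < ‖u h‖ + δ := by positivity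
      have hden2 : (0:ℝ) < |v h| + δ := by positivity
      have e1 : ‖u' h‖ ^ 2 = (|v h| + δ) / (‖u h‖ + δ) * ‖u h‖ ^ 2 := by
        rw [hu', norm_smul, mul_pow, Real.norm_eq_abs, sq_abs, hcsq h]
      have e2 : (v' h) ^ 2 = (v h) ^ 2 * ((‖u h‖ + δ) / (|v h| + δ)) := by
        rw [hv', div_pow, hcsq h, div_div_eq_mul_div, mul_div_assoc]
      have b1 : (|v h| + δ) / (‖u h‖ + δ) * ‖u h‖ ^ 2 ≤ (|v h| + δ) * ‖u h‖ := by
        rw [div_mul_eq_mul_div, div_le_iff₀ hden1]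
        nlinarith [mul_nonneg (mul_nonneg hden2.le hx0) hδ.le]
      have b2 : (v h) ^ 2 * ((‖u h‖ + δ) / (|v h| + δ)) ≤ |v h| * (‖u h‖ + δ) := by
        rw [mul_div_assoc', div_le_iff₀ hden2]
        nlinarith [sq_abs (v h), mul_nonneg (mul_nonneg hden1.le hw0) hδ.le]
      have b1' : (|v h| + δ) * ‖u h‖ ≤ |v h| + δ := by nlinarith
      have b2' : |v h| * (‖u h‖ + δ) ≤ |v h| * (1 + δ) := by nlinarith
      rw [e1, e2]
      nlinarith
    have hsum : ∑ h, (‖u' h‖ ^ 2 + (v' h) ^ 2) ≤ 2 * S + δ * ((H:ℝ) + S) := by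
      calc ∑ h, (‖u' h‖ ^ 2 + (v' h) ^ 2) ≤ ∑ h, (2 * |v h| + δ * (1 + |v h|)) :=
            Finset.sum_le_sum hterm
        _ = 2 * S + δ * ((H:ℝ) + S) := by
            rw [Finset.sum_add_distrib, ← Finset.mul_sum, ← Finset.mul_sum, hS]
            simp [Finset.sum_add_distrib, mul_add]
    have hδHS : (lam / 2) * (δ * ((H:ℝ) + S)) ≤ ε := by
      have hld : lam / 2 * δ = ε / ((H:ℝ) + S + 1) := by
        rw [hδdef]; field_simp
      rw [← mul_assoc, hld, div_mul_eq_mul_div, div_le_iff₀ (by linarith)]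
      nlinarith
    have := mul_le_mul_of_nonneg_left hsum (by positivity : (0:ℝ) ≤ lam / 2)
    rw [mul_add] at this
    have h2S : (lam / 2) * (2 * S) = lam * S := by ring
    linarith
end

section
/- Let L: ℝ × ℝ → ℝ be any loss function, (x_t, y_t)_{t=1}^n training data in ℝ^d × ℝ, and λ > 0. Then the infimum over v ∈ ℝ^H and u_1,…,u_H ∈ ℝ^d of Σ_t L(y_t, Σ_h v_h·[⟨u_h, x_t⟩]_+) + (λ/2)·Σ_h (‖u_h‖² + v_h²) equals the infimum of Σ_t L(y_t, Σ_h v_h·[⟨u_h, x_t⟩]_+) + λ·Σ_h |v_h| subject to ‖u_h‖ ≤ 1 for all h. -/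
/-!
By positive homogeneity of the ReLU, a hidden unit `x ↦ a * [⟪w, x⟫]₊` is unchanged under
`(a, w) ↦ (a / c, c • w)` for `c > 0`. Rescaling every unit to `‖w‖ ≤ 1` turns the weight decay
penalty `(‖w‖² + a²) / 2` into at most `|a|` (AM-GM), and conversely a unit with `‖w‖ ≤ 1` can be
balanced with `c = √|a|` to have weight decay penalty at most `|a|`. Hence each objective value of
one problem is bounded below by an objective value of the other, and the infima agree.
-/

open Finset

section Neuron

variable {E : Type*} [NormedAddCommGroup E] [InnerProductSpace ℝ E]

def reluNeuron (a : ℝ) (w x : E) : ℝ := a * max (inner ℝ w x) 0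

lemma reluNeuron_zero_right (a : ℝ) : reluNeuron a (0 : E) = 0 := by
  ext x
  simp [reluNeuron]

lemma reluNeuron_smul (a : ℝ) {c : ℝ} (hc : 0 ≤ c) (w : E) :
    reluNeuron a (c • w) = reluNeuron (a * c) w := by
  ext x
  simp only [reluNeuron, real_inner_smul_left, mul_max_of_nonneg _ _ hc, mul_zero, mul_assoc]

lemma exists_reluNeuron_eq_unit_rescale (a : ℝ) (w : E) :
    ∃ a' w', ‖w'‖ ≤ 1 ∧ reluNeuron a' w' = reluNeuron a w ∧ 2 * |a'| ≤ ‖w‖ ^ 2 + a ^ 2 := by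
  rcases eq_or_ne w 0 with rfl | hw
  · exact ⟨0, 0, by simp, by rw [reluNeuron_zero_right, reluNeuron_zero_right], by simpa using sq_nonneg a⟩
  have hw' : ‖w‖ ≠ 0 := norm_ne_zero_iff.mpr hw
  refine ⟨a * ‖w‖, ‖w‖⁻¹ • w, ?_, ?_, ?_⟩
  · rw [norm_smul, norm_inv, norm_norm, inv_mul_cancel₀ hw']
  · rw [reluNeuron_smul _ (inv_nonneg.mpr (norm_nonneg w)), mul_inv_cancel_right₀ hw']
  · calc 2 * |a * ‖w‖| = 2 * ‖w‖ * |a| := by rw [abs_mul, abs_norm]; ring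
      _ ≤ ‖w‖ ^ 2 + |a| ^ 2 := two_mul_le_add_sq _ _
      _ = ‖w‖ ^ 2 + a ^ 2 := by rw [sq_abs]

lemma exists_reluNeuron_eq_balanced_rescale (a : ℝ) {w : E} (hw : ‖w‖ ≤ 1) :
    ∃ a' w', reluNeuron a' w' = reluNeuron a w ∧ ‖w'‖ ^ 2 + a' ^ 2 ≤ 2 * |a| := by
  -- holds at `a = 0` too, since `0 / 0 = 0`
  have hscale : a / √|a| * √|a| = a := by
    rcases eq_or_ne a 0 with rfl | ha
    · simp
    · exact div_mul_cancel₀ a (Real.sqrt_ne_zero'.mpr (abs_pos.mpr ha))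
  have hsq : √|a| ^ 2 = |a| := Real.sq_sqrt (abs_nonneg a)
  have hdiv : a ^ 2 / |a| = |a| := by rw [← sq_abs, sq, mul_self_div_self]
  refine ⟨a / √|a|, √|a| • w, by rw [reluNeuron_smul _ (Real.sqrt_nonneg _), hscale], ?_⟩
  calc ‖√|a| • w‖ ^ 2 + (a / √|a|) ^ 2 = |a| * ‖w‖ ^ 2 + |a| := by
        rw [norm_smul, Real.norm_of_nonneg (Real.sqrt_nonneg _), mul_pow, hsq, div_pow, hsq, hdiv]
    _ ≤ |a| * 1 + |a| := by gcongr; exact pow_le_one₀ (norm_nonneg w) hw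
    _ = 2 * |a| := by ring

end Neuron

section Network

variable {ι E : Type*} [Fintype ι] [NormedAddCommGroup E] [InnerProductSpace ℝ E]

lemma exists_sum_reluNeuron_eq_unit_rescale (v : ι → ℝ) (u : ι → E) :
    ∃ (v' : ι → ℝ) (u' : ι → E), (∀ h, ‖u' h‖ ≤ 1) ∧
      (∀ x, ∑ h, reluNeuron (v' h) (u' h) x = ∑ h, reluNeuron (v h) (u h) x) ∧
      2 * ∑ h, |v' h| ≤ ∑ h, (‖u h‖ ^ 2 + v h ^ 2) := by
  choose v' u' hu' hneuron hpen using fun h => exists_reluNeuron_eq_unit_rescale (v h) (u h)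
  refine ⟨v', u', hu', fun x => by simp only [hneuron], ?_⟩
  rw [mul_sum]
  exact sum_le_sum fun h _ => hpen h

lemma exists_sum_reluNeuron_eq_balanced_rescale (v : ι → ℝ) {u : ι → E} (hu : ∀ h, ‖u h‖ ≤ 1) :
    ∃ (v' : ι → ℝ) (u' : ι → E),
      (∀ x, ∑ h, reluNeuron (v' h) (u' h) x = ∑ h, reluNeuron (v h) (u h) x) ∧
      ∑ h, (‖u' h‖ ^ 2 + v' h ^ 2) ≤ 2 * ∑ h, |v h| := by
  choose v' u' hneuron hpen using fun h => exists_reluNeuron_eq_balanced_rescale (v h) (hu h)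
  refine ⟨v', u', fun x => by simp only [hneuron], ?_⟩
  rw [mul_sum]
  exact sum_le_sum fun h _ => hpen h

end Network

/-- Theorem 1 of Neyshabur–Tomioka–Srebro: global ℓ2 weight decay on a two-layer
ReLU network is equivalent to unit-norm hidden weights with ℓ1 top-layer regularization. -/
theorem two_layer_weight_decay_eq_l1 {d H n : ℕ} (L : ℝ → ℝ → ℝ)
    (x : Fin n → EuclideanSpace ℝ (Fin d)) (y : Fin n → ℝ)
    (lam : ℝ) (hlam : 0 < lam) :
    sInf {r : ℝ | ∃ (v : Fin H → ℝ) (u : Fin H → EuclideanSpace ℝ (Fin d)),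
        r = (∑ t, L (y t) (∑ h, v h * max (inner ℝ (u h) (x t) : ℝ) 0))
          + (lam / 2) * ∑ h, (‖u h‖ ^ 2 + (v h) ^ 2)} =
    sInf {r : ℝ | ∃ (v : Fin H → ℝ) (u : Fin H → EuclideanSpace ℝ (Fin d)),
        (∀ h, ‖u h‖ ≤ 1) ∧
        r = (∑ t, L (y t) (∑ h, v h * max (inner ℝ (u h) (x t) : ℝ) 0))
          + lam * ∑ h, |v h|} := by
  refine csInf_eq_csInf_of_forall_exists_le ?_ ?_
  · rintro _ ⟨v, u, rfl⟩
    obtain ⟨v', u', hu', hnet, hpen⟩ := exists_sum_reluNeuron_eq_unit_rescale v u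
    refine ⟨_, ⟨v', u', hu', rfl⟩, ?_⟩
    simp only [reluNeuron] at hnet
    simp only [hnet]
    linarith [mul_le_mul_of_nonneg_left hpen hlam.le]
  · rintro _ ⟨v, u, hu, rfl⟩
    obtain ⟨v', u', hnet, hpen⟩ := exists_sum_reluNeuron_eq_balanced_rescale v hu
    refine ⟨_, ⟨v', u', rfl⟩, ?_⟩
    simp only [reluNeuron] at hnet
    simp only [hnet]
    linarith [mul_le_mul_of_nonneg_left hpen hlam.le]
end

section
/- Let L be a loss, data (x_t, y_t)_{t=1}^n in ℝ^d × ℝ, and λ > 0. The infimum over matrices U ∈ ℝ^{d×H}, V ∈ ℝ^{k=1 output, i.e. v ∈ ℝ^H} of Σ_t L(y_t, Σ_h v_h·⟨u_h, x_t⟩) + (λ/2)·Σ_h(‖u_h‖² + v_h²), taken over all H, equals the infimum over w ∈ ℝ^d of Σ_t L(y_t, ⟨w, x_t⟩) + λ·‖w‖, where ‖w‖ is the Euclidean norm. -/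
/-!
Writing `w = ∑ₕ vₕ • uₕ` for the linear map computed by the network, AM-GM gives
`‖w‖ ≤ ∑ₕ |vₕ| ‖uₕ‖ ≤ ½ ∑ₕ (‖uₕ‖² + vₕ²)`, so every network objective dominates the
norm-regularized objective of its effective predictor. Conversely, any `w` is computed by a single
unit with `v = √‖w‖` and `u = w / √‖w‖`, for which the weight-decay penalty is exactly `‖w‖`.
-/

open Finset

section WeightDecay

variable {E : Type*}

theorem norm_sum_smul_le_half_sum_sq [SeminormedAddCommGroup E] [NormedSpace ℝ E]
    {ι : Type*} (s : Finset ι) (v : ι → ℝ) (u : ι → E) :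
    ‖∑ i ∈ s, v i • u i‖ ≤ (∑ i ∈ s, (‖u i‖ ^ 2 + v i ^ 2)) / 2 := by
  rw [sum_div]
  refine (norm_sum_le _ _).trans (sum_le_sum fun i _ => ?_)
  rw [norm_smul, Real.norm_eq_abs, ← sq_abs (v i)]
  linarith [two_mul_le_add_sq |v i| ‖u i‖]

theorem sqrt_norm_smul_inv_sqrt_norm_smul [NormedAddCommGroup E] [NormedSpace ℝ E] (w : E) :
    √‖w‖ • (√‖w‖)⁻¹ • w = w := by
  rcases eq_or_ne w 0 with rfl | hw
  · simp
  · exact smul_inv_smul₀ (Real.sqrt_ne_zero'.2 (norm_pos_iff.2 hw)) w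

theorem norm_inv_sqrt_norm_smul_sq [SeminormedAddCommGroup E] [NormedSpace ℝ E] (w : E) :
    ‖(√‖w‖)⁻¹ • w‖ ^ 2 = ‖w‖ := by
  rw [norm_smul, mul_pow, norm_inv, Real.norm_eq_abs, inv_pow, sq_abs,
    Real.sq_sqrt (norm_nonneg w), ← div_eq_inv_mul, sq, mul_self_div_self]

end WeightDecay

/-- With linear activations and a single output, ℓ2 weight decay over networks of all
sizes is equivalent to Euclidean-norm regularization of the effective linear predictor. -/
theorem linear_net_weight_decay_eq_norm_reg {d n : ℕ} (L : ℝ → ℝ → ℝ)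
    (x : Fin n → EuclideanSpace ℝ (Fin d)) (y : Fin n → ℝ)
    (lam : ℝ) (hlam : 0 < lam) :
    sInf {r : ℝ | ∃ (H : ℕ) (v : Fin H → ℝ) (u : Fin H → EuclideanSpace ℝ (Fin d)),
        r = (∑ t, L (y t) (∑ h, v h * (inner ℝ (u h) (x t) : ℝ)))
          + (lam / 2) * ∑ h, (‖u h‖ ^ 2 + (v h) ^ 2)} =
    sInf {r : ℝ | ∃ w : EuclideanSpace ℝ (Fin d),
        r = (∑ t, L (y t) ((inner ℝ w (x t) : ℝ))) + lam * ‖w‖} := by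
  apply csInf_eq_csInf_of_forall_exists_le
  · rintro _ ⟨H, v, u, rfl⟩
    refine ⟨_, ⟨∑ h, v h • u h, rfl⟩, ?_⟩
    simp only [sum_inner, real_inner_smul_left]
    gcongr _ + ?_
    calc lam * ‖∑ h, v h • u h‖ ≤ lam * ((∑ h, (‖u h‖ ^ 2 + v h ^ 2)) / 2) := by
          gcongr; exact norm_sum_smul_le_half_sum_sq univ v u
      _ = lam / 2 * ∑ h, (‖u h‖ ^ 2 + v h ^ 2) := by ring
  · rintro _ ⟨w, rfl⟩
    refine ⟨_, ⟨1, fun _ => √‖w‖, fun _ => (√‖w‖)⁻¹ • w, rfl⟩, le_of_eq ?_⟩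
    simp only [Fin.sum_univ_one, ← real_inner_smul_left, sqrt_norm_smul_inv_sqrt_norm_smul,
      norm_inv_sqrt_norm_smul_sq, Real.sq_sqrt (norm_nonneg w)]
    ring
end
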